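/- arXiv:2408.13558 — 3 statements merged into one kernel-verified Lean document; each statement's English description precedes it below -/
import Mathlib

section
/- Let A be a finite abelian group and let G = A ⋊₋₁ C₂ be the generalized dihedral group over A (the nontrivial element of C₂ acts on A by inversion). Then the small Davenport constant of G equals d(A) + 1; that is: (i) there exists a multiset over G of cardinality d(A) + 1 such that no nonempty submultiset admits an ordering of its terms whose product is the identity, and (ii) every multiset over G of cardinality d(A) + 2 has a nonempty submultiset admitting an ordering of its terms whose product is the identity. -/
/-!
Write `ρ a = (a, τ)` for the reflections of `A ⋊₋₁ C₂`; then `ρ a * ρ b = a / b ∈ A`.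
Adjoining one reflection to a longest product-one free sequence over `A` keeps it product-one
free, since the image in `C₂` of a product detects whether the reflection is used. Conversely, a
sequence of reflections `ρ a₀, …, ρ aₖ` and rotations `T` gives the `k + |T| > d(A)` elements
`a₀ / a₁, …, aₖ₋₁ / aₖ` and `T` of `A`, hence a product-one subsequence there. A product of some
of the quotients `aᵢ / aᵢ₊₁` telescopes to `∏ P / ∏ N` for disjoint subsequences `P, N` of the
`aᵢ` of equal length, and that is the product of the reflections taken alternately from `P`
and `N`.
-/

/-- A multiset (sequence) over `G` is product-one free if no nonempty submultiset
admits an ordering of its terms whose product is the identity. -/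
def ProductOneFreeM {G : Type*} [Group G] (s : Multiset G) : Prop :=
  ∀ t : Multiset G, t ≤ s → t ≠ 0 → ∀ l : List G, (l : Multiset G) = t → l.prod ≠ 1

/-- The small Davenport constant: the maximal cardinality of a product-one free
multiset over `G`. -/
noncomputable def smallDavenport (G : Type*) [Group G] : ℕ :=
  sSup {n : ℕ | ∃ s : Multiset G, ProductOneFreeM s ∧ Multiset.card s = n}
/-- The action of `C₂ = Multiplicative (ZMod 2)` on a commutative group `A` in which the
nontrivial element acts by the inversion automorphism `x ↦ x⁻¹`. -/
noncomputable def invActionHom (A : Type*) [CommGroup A] :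
    Multiplicative (ZMod 2) →* MulAut A :=
  AddMonoidHom.toMultiplicativeLeft
    (ZMod.lift 2 ⟨zmultiplesHom (Additive (MulAut A)) (Additive.ofMul (MulEquiv.inv A)), by
      show (2 : ℤ) • Additive.ofMul (MulEquiv.inv A) = 0
      have h : (MulEquiv.inv A) ^ (2 : ℤ) = 1 := by
        ext x
        simp [zpow_two, pow_two, MulAut.mul_apply]
      rw [show ((2 : ℤ) • Additive.ofMul (MulEquiv.inv A)) =
            Additive.ofMul ((MulEquiv.inv A) ^ (2 : ℤ)) from rfl, h]
      rfl⟩)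

section Group

variable {G : Type*} [Group G] {s : Multiset G}

theorem productOneFreeM_iff :
    ProductOneFreeM s ↔ ∀ l : List G, (l : Multiset G) ≤ s → l.prod = 1 → l = [] := by
  refine ⟨fun h l hl hprod => ?_, fun h t ht ht0 l hlt hprod => ?_⟩
  · by_contra hne
    exact h l hl (by simpa using hne) l rfl hprod
  · subst hlt
    exact ht0 (by simp [h l ht hprod])

theorem productOneFreeM_zero : ProductOneFreeM (0 : Multiset G) :=
  productOneFreeM_iff.2 fun l hl _ => by simpa using hl

theorem ProductOneFreeM.card_lt_card [Finite G] (hs : ProductOneFreeM s) :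
    Multiset.card s < Nat.card G := by
  have := Fintype.ofFinite G
  obtain ⟨l, rfl⟩ := Quot.exists_rep s
  by_contra! hl
  -- pigeonhole on the `|G| + 1` prefix products
  obtain ⟨i, hi, j, hj, hij, heq⟩ := Finset.exists_ne_map_eq_of_card_lt_of_maps_to
    (s := Finset.range (l.length + 1)) (t := Finset.univ) (f := fun i => (l.take i).prod)
    (by simp_all [Nat.card_eq_fintype_card]) (by simp)
  wlog hlt : i < j generalizing i j
  · exact this j hj i hi hij.symm heq.symm (by omega)
  set segment := (l.drop i).take (j - i)
  have hsplit : l.take j = l.take i ++ segment := by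
    rw [← List.take_add, Nat.add_sub_cancel' hlt.le]
  have hsegment : segment.prod = 1 := by
    simpa [hsplit] using heq.symm
  have hlength : segment.length = j - i := by
    simp only [segment, List.length_take, List.length_drop]
    rw [Finset.mem_range] at hj
    omega
  have := productOneFreeM_iff.1 hs segment
    (Multiset.coe_le.2 ((List.take_sublist _ _).trans (List.drop_sublist _ _)).subperm) hsegment
  rw [this, List.length_nil] at hlength
  omega

theorem bddAbove_card_productOneFreeM [Finite G] :
    BddAbove {n : ℕ | ∃ s : Multiset G, ProductOneFreeM s ∧ Multiset.card s = n} :=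
  ⟨Nat.card G, by rintro _ ⟨s, hs, rfl⟩; exact hs.card_lt_card.le⟩

theorem ProductOneFreeM.card_le_smallDavenport [Finite G] (hs : ProductOneFreeM s) :
    Multiset.card s ≤ smallDavenport G :=
  le_csSup bddAbove_card_productOneFreeM ⟨s, hs, rfl⟩

theorem exists_productOneFreeM_card_eq_smallDavenport (G : Type*) [Group G] [Finite G] :
    ∃ s : Multiset G, ProductOneFreeM s ∧ Multiset.card s = smallDavenport G :=
  Nat.sSup_mem (s := {n : ℕ | ∃ s : Multiset G, ProductOneFreeM s ∧ Multiset.card s = n})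
    ⟨0, 0, productOneFreeM_zero, rfl⟩ bddAbove_card_productOneFreeM

theorem ProductOneFreeM.map_of_injective {H : Type*} [Group H] {s : Multiset H} (f : H →* G)
    (hf : Function.Injective f) (hs : ProductOneFreeM s) : ProductOneFreeM (s.map f) := by
  rw [productOneFreeM_iff] at hs ⊢
  intro l hl hprod
  set g := Function.invFun f
  have hfg : ∀ x ∈ l, f (g x) = x := fun x hx => by
    obtain ⟨y, -, rfl⟩ := Multiset.mem_map.1 (Multiset.mem_of_le hl hx)
    exact congrArg f (Function.leftInverse_invFun hf y)
  have hlift : (l.map g : Multiset H) ≤ s := by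
    have hgf : (fun x => g (f x)) = id := funext (Function.leftInverse_invFun hf)
    simpa [hgf] using Multiset.map_le_map (f := g) hl
  have hmap : (l.map g).map f = l := by
    simpa [List.map_map, Function.comp_def] using List.map_congr_left hfg
  simpa using hs _ hlift (hf (by rw [map_one, map_list_prod, hmap, hprod]))

theorem ProductOneFreeM.cons_of_map_ne_one {Q : Type*} [CommGroup Q] (φ : G →* Q) {g : G}
    (hs : ProductOneFreeM s) (hφs : ∀ x ∈ s, φ x = 1) (hg : φ g ≠ 1) :
    ProductOneFreeM (g ::ₘ s) := by
  classical
  rw [productOneFreeM_iff] at hs ⊢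
  intro l hl hprod
  by_cases hgl : g ∈ l
  · have hrest : (l : Multiset G).erase g ≤ s := Multiset.erase_le_iff_le_cons.2 hl
    have : φ l.prod = φ g := by
      rw [map_list_prod, ← Multiset.prod_coe, ← Multiset.map_coe,
        ← Multiset.cons_erase (Multiset.mem_coe.2 hgl), Multiset.map_cons, Multiset.prod_cons,
        Multiset.prod_eq_one fun y hy => ?_, mul_one]
      obtain ⟨x, hx, rfl⟩ := Multiset.mem_map.1 hy
      exact hφs x (Multiset.mem_of_le hrest hx)
    exact absurd (this.symm.trans (by rw [hprod, map_one])) hg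
  · exact hs l ((Multiset.le_cons_of_notMem (by simpa using hgl)).1 hl) hprod

end Group

theorem productOneFreeM_iff_of_comm {A : Type*} [CommGroup A] {s : Multiset A} :
    ProductOneFreeM s ↔ ∀ t ≤ s, t.prod = 1 → t = 0 := by
  rw [productOneFreeM_iff]
  refine ⟨fun h t ht hprod => ?_, fun h l hl hprod => ?_⟩
  · rw [← Multiset.coe_toList t] at ht
    simpa using h t.toList ht (by rwa [Multiset.prod_toList])
  · simpa using h l hl (by rwa [Multiset.prod_coe])

theorem Multiset.exists_le_le_add_eq_of_le_add {α : Type*} {u w₁ w₂ : Multiset α}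
    (h : u ≤ w₁ + w₂) : ∃ u₁ ≤ w₁, ∃ u₂ ≤ w₂, u₁ + u₂ = u := by
  classical
  refine ⟨u ∩ w₁, Multiset.inter_le_right, u - w₁, ?_, ?_⟩
  · rw [Multiset.sub_le_iff_le_add, add_comm]
    exact h
  · ext a
    have := Multiset.count_le_of_le a h
    simp only [Multiset.count_add, Multiset.count_inter, Multiset.count_sub] at this ⊢
    omega

theorem Multiset.add_le_of_le_cons {α : Type*} {P N l : Multiset α} {a : α} (ha : a ∉ P)
    (h : P + N ≤ a ::ₘ l) (hN : N ≤ l) : P + N ≤ l := by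
  classical
  rw [Multiset.le_iff_count] at h hN ⊢
  intro b
  have hb := h b
  by_cases hab : b = a
  · subst hab
    simpa [Multiset.count_eq_zero.2 ha] using hN b
  · simpa [Multiset.count_cons, hab] using hb

section CommGroup

variable {α : Type*} [CommGroup α]

def consecutiveQuotients : List α → List α
  | a :: b :: l => a / b :: consecutiveQuotients (b :: l)
  | _ => []

theorem length_consecutiveQuotients :
    ∀ l : List α, (consecutiveQuotients l).length = l.length - 1
  | a :: b :: l => by simp [consecutiveQuotients, length_consecutiveQuotients (b :: l)]
  | [] | [_] => rfl

-- `N ≤ l.tail` says that the head of `l` only ever enters `P`, which leaves room for it in `N`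
-- one step up the recursion.
theorem exists_prod_eq_div_of_le_consecutiveQuotients : ∀ (l : List α) {U : Multiset α},
    U ≤ consecutiveQuotients l → ∃ P N : Multiset α, P + N ≤ l ∧ N ≤ l.tail ∧
      Multiset.card P = Multiset.card N ∧ (U ≠ 0 → P ≠ 0) ∧ U.prod = P.prod / N.prod
  | [], U, hU | [_], U, hU => by
    obtain rfl : U = 0 := by simpa [consecutiveQuotients] using hU
    exact ⟨0, 0, by simp, by simp, rfl, by simp, by simp⟩
  | a :: b :: l, U, hU => by
    classical
    change U ≤ a / b ::ₘ (consecutiveQuotients (b :: l) : Multiset α) at hU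
    by_cases hab : a / b ∈ U
    · obtain ⟨P, N, hPN, hN, hcard, -, hprod⟩ :=
        exists_prod_eq_div_of_le_consecutiveQuotients (b :: l) (Multiset.erase_le_iff_le_cons.2 hU)
      rw [← Multiset.cons_erase hab, Multiset.prod_cons, hprod]
      simp only [List.tail_cons, ← Multiset.cons_coe] at hPN hN ⊢
      by_cases hbP : b ∈ P
      · -- the `b` of `a / b` cancels against the copy of `b` already in `P`
        refine ⟨a ::ₘ P.erase b, N, ?_, hN.trans (Multiset.le_cons_self _ _), ?_, by simp, ?_⟩
        · rw [Multiset.cons_add, ← Multiset.erase_add_left_pos N hbP]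
          exact Multiset.cons_le_cons a (Multiset.erase_le_iff_le_cons.2 hPN |>.trans
            (Multiset.le_cons_self _ _))
        · rw [Multiset.card_cons, Multiset.card_erase_add_one hbP, hcard]
        · rw [Multiset.prod_cons, ← Multiset.prod_erase hbP, mul_div_assoc, ← mul_assoc,
            div_mul_cancel, mul_div_assoc]
      · refine ⟨a ::ₘ P, b ::ₘ N, ?_, Multiset.cons_le_cons b hN, by simp [hcard], by simp,
          ?_⟩
        · rw [Multiset.cons_add, Multiset.add_cons]
          exact Multiset.cons_le_cons a (Multiset.cons_le_cons b
            (Multiset.add_le_of_le_cons hbP hPN hN))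
        · simp only [Multiset.prod_cons]
          exact div_mul_div_comm a b _ _
    · obtain ⟨P, N, hPN, hN, hcard, hP, hprod⟩ :=
        exists_prod_eq_div_of_le_consecutiveQuotients (b :: l)
          ((Multiset.le_cons_of_notMem hab).1 hU)
      simp only [List.tail_cons, ← Multiset.cons_coe] at hPN hN ⊢
      exact ⟨P, N, hPN.trans (Multiset.le_cons_self _ a), hN.trans (Multiset.le_cons_self _ b),
        hcard, hP, hprod⟩

end CommGroup

section GeneralizedDihedral

open SemidirectProduct

variable {A : Type*} [CommGroup A]

local notation "D" => A ⋊[invActionHom A] Multiplicative (ZMod 2)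

def dihedralReflection (a : A) : D := ⟨a, Multiplicative.ofAdd 1⟩

local notation "ρ" => dihedralReflection

theorem dihedralReflection_mul_dihedralReflection (a b : A) : ρ a * ρ b = inl (a / b) := by
  ext
  · exact (div_eq_mul_inv a b).symm
  · exact (by decide : (1 + 1 : ZMod 2) = 0)

theorem exists_eq_map_dihedralReflection_add_map_inl (s : Multiset D) :
    ∃ R T : Multiset A, s = R.map ρ + T.map inl := by
  classical
  refine ⟨(s.filter (·.right ≠ 1)).map left, (s.filter (·.right = 1)).map left, ?_⟩
  conv_lhs => rw [← Multiset.filter_add_not (·.right ≠ 1) s]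
  simp only [Multiset.map_map, ne_eq, not_not]
  congr 1 <;> refine (Multiset.map_id' _).symm.trans (Multiset.map_congr rfl fun x hx => ?_)
  · have hx : x.right ≠ 1 := (Multiset.mem_filter.1 hx).2
    ext
    · rfl
    · have : ∀ σ : Multiplicative (ZMod 2), σ ≠ 1 → σ = .ofAdd 1 := by decide
      exact congrArg _ (this _ hx)
  · ext
    · rfl
    · simpa using (Multiset.mem_filter.1 hx).2

theorem exists_list_prod_dihedralReflection_eq_inl_div (P N : Multiset A)
    (h : Multiset.card P = Multiset.card N) :
    ∃ l : List D, (l : Multiset D) = P.map ρ + N.map ρ ∧ l.prod = inl (P.prod / N.prod) := by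
  induction P using Multiset.induction_on generalizing N with
  | empty =>
    obtain rfl : N = 0 := by simpa [eq_comm] using h
    exact ⟨[], by simp, by simp⟩
  | cons a P ih =>
    obtain ⟨b, hb⟩ := Multiset.card_pos_iff_exists_mem.1 (by simp [← h] : 0 < Multiset.card N)
    obtain ⟨N, rfl⟩ := Multiset.exists_cons_of_mem hb
    obtain ⟨l, hl, hprod⟩ := ih N (by simpa using h)
    refine ⟨ρ a :: ρ b :: l, ?_, ?_⟩
    · rw [← Multiset.cons_coe, ← Multiset.cons_coe, hl, Multiset.map_cons, Multiset.map_cons,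
        Multiset.cons_add, Multiset.add_cons]
    · rw [List.prod_cons, List.prod_cons, ← mul_assoc, dihedralReflection_mul_dihedralReflection,
        hprod, ← map_mul, Multiset.prod_cons, Multiset.prod_cons, div_mul_div_comm]

theorem not_productOneFreeM_map_dihedralReflection_add_map_inl [Finite A] (R T : Multiset A)
    (hcard : smallDavenport A + 2 ≤ Multiset.card R + Multiset.card T) :
    ¬ ProductOneFreeM (R.map ρ + T.map inl) := by
  -- the `|R| - 1` consecutive quotients of `R` together with `T` number more than `d(A)`
  obtain ⟨U, hUle, hprod, hU⟩ :
      ∃ U ≤ (consecutiveQuotients R.toList : Multiset A) + T, U.prod = 1 ∧ U ≠ 0 := by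
    have hW := mt (ProductOneFreeM.card_le_smallDavenport
      (s := (consecutiveQuotients R.toList : Multiset A) + T))
    simp only [Multiset.card_add, Multiset.coe_card, length_consecutiveQuotients,
      Multiset.length_toList, productOneFreeM_iff_of_comm, not_forall] at hW
    obtain ⟨U, hUle, hprod, hU⟩ := hW (by omega)
    exact ⟨U, hUle, hprod, hU⟩
  obtain ⟨U₁, hU₁, U₂, hU₂, rfl⟩ := Multiset.exists_le_le_add_eq_of_le_add hUle
  obtain ⟨P, N, hPN, -, hcardPN, hP, hprod₁⟩ :=
    exists_prod_eq_div_of_le_consecutiveQuotients R.toList hU₁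
  obtain ⟨l, hl, hlprod⟩ := exists_list_prod_dihedralReflection_eq_inl_div P N hcardPN
  rw [productOneFreeM_iff]
  intro h
  have hle : ((l ++ U₂.toList.map inl : List D) : Multiset D) ≤ R.map ρ + T.map inl := by
    rw [← Multiset.coe_add, hl, ← Multiset.map_coe, Multiset.coe_toList, ← Multiset.map_add]
    refine add_le_add (Multiset.map_le_map ?_) (Multiset.map_le_map hU₂)
    simpa using hPN
  have hone : (l ++ U₂.toList.map inl).prod = 1 := by
    rw [List.prod_append, hlprod, ← map_list_prod, Multiset.prod_toList, ← map_mul,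
      ← hprod₁, ← Multiset.prod_add, hprod, map_one]
  obtain ⟨rfl, rfl⟩ : l = [] ∧ U₂ = 0 := by simpa using h _ hle hone
  obtain ⟨rfl, -⟩ : P = 0 ∧ N = 0 := by simpa [eq_comm] using hl
  exact hP (by simpa using hU) rfl

end GeneralizedDihedral

/-- For a finite abelian group `A` and `G = A ⋊₋₁ C₂`, the small Davenport
constant of `G` equals `d(A) + 1`: (i) there is a product-one free multiset over `G` of
cardinality `d(A) + 1`, and (ii) no multiset over `G` of cardinality `d(A) + 2` is
product-one free. -/
theorem smallDavenport_generalizedDihedral (A : Type*) [CommGroup A] [Finite A] :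
    (∃ s : Multiset (A ⋊[invActionHom A] Multiplicative (ZMod 2)),
        Multiset.card s = smallDavenport A + 1 ∧ ProductOneFreeM s) ∧
    (∀ s : Multiset (A ⋊[invActionHom A] Multiplicative (ZMod 2)),
        Multiset.card s = smallDavenport A + 2 → ¬ ProductOneFreeM s) := by
  refine ⟨?_, fun s hs => ?_⟩
  · obtain ⟨s₀, hs₀, hcard⟩ := exists_productOneFreeM_card_eq_smallDavenport A
    refine ⟨SemidirectProduct.inr (.ofAdd 1) ::ₘ s₀.map SemidirectProduct.inl,
      by simp [hcard], ?_⟩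
    exact (hs₀.map_of_injective _ SemidirectProduct.inl_injective).cons_of_map_ne_one
      SemidirectProduct.rightHom (by simp) (by simp)
  · obtain ⟨R, T, rfl⟩ := exists_eq_map_dihedralReflection_add_map_inl s
    exact not_productOneFreeM_map_dihedralReflection_add_map_inl R T (by simpa using hs.ge)
end

section
/- Let α, β, γ be integers with α ≥ 2γ, β ≥ γ ≥ 1 and α + β > 3, and let G be a finite group of order 2^(α+β) together with elements a, b such that G is generated by {a, b}, orderOf a = 2^α, orderOf b = 2^β, b⁻¹ a b = a^(1 + 2^(α−γ)) (equivalently, the commutator [a,b] equals a^(2^(α−γ)) and has order 2^γ), and the cyclic subgroups ⟨a⟩ and ⟨b⟩ intersect trivially (this is the group G₂ = ⟨a⟩ ⋊ ⟨b⟩). Then the Loewy length of G satisfies L(G) = 2^α + 2^β − 1. -/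
/-!
Put `x = b - 1` and `y = a - 1` in `𝔽₂[G]`. In characteristic `2` the relation
`a b = b a^(1 + 2^e)` becomes `y x = x y + b a y^(2^e)` with `2^e ≥ 2`, so moving `y` to the right
of `x` only produces terms of higher degree. Hence the spans `F n` of the ordered monomials
`x^p y^q` with `p + q ≥ n` form a multiplicative filtration. The augmentation ideal is maximal and
lies in `F 1`, so it is nilpotent and equals the Jacobson radical; since `x^(2^β) = y^(2^α) = 0`,
its `(2^α + 2^β - 1)`-th power vanishes. Its `(2^α + 2^β - 2)`-th power contains
`x^(2^β - 1) y^(2^α - 1) = ∑ b^j a^i`, which is nonzero because `⟨a⟩ ∩ ⟨b⟩ = 1`.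
-/

/-- The Loewy length of a finite `p`-group `G`: the least positive integer `n` such that
the `n`-th power of the Jacobson radical of the group algebra `𝔽_p[G]` vanishes. -/
noncomputable def loewyLength (p : ℕ) (G : Type*) [Group G] : ℕ :=
  sInf {n : ℕ | 0 < n ∧ (Ideal.jacobson (⊥ : Ideal (MonoidAlgebra (ZMod p) G))) ^ n = ⊥}

section MonomialFiltration

open Submodule

variable (K : Type*) {R : Type*} [CommRing K] [Ring R] [Algebra K R]

def monomialFiltration (x y : R) (n : ℕ) : Submodule K R :=
  span K {r | ∃ p q : ℕ, n ≤ p + q ∧ r = x ^ p * y ^ q}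

namespace monomialFiltration

variable {K} {x y : R}

lemma pow_mul_pow_mem {p q n : ℕ} (h : n ≤ p + q) :
    x ^ p * y ^ q ∈ monomialFiltration K x y n :=
  subset_span ⟨p, q, h, rfl⟩

lemma fst_mem : x ∈ monomialFiltration K x y 1 := by
  simpa using pow_mul_pow_mem (K := K) (x := x) (y := y) (p := 1) (q := 0) le_rfl

lemma snd_mem : y ∈ monomialFiltration K x y 1 := by
  simpa using pow_mul_pow_mem (K := K) (x := x) (y := y) (p := 0) (q := 1) le_rfl

lemma antitone : Antitone (monomialFiltration K x y) :=
  fun _ _ h => span_mono fun _ ⟨p, q, h', hr⟩ => ⟨p, q, h.trans h', hr⟩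

lemma le_comap {f : R →ₗ[K] R} {n n' : ℕ}
    (hf : ∀ p q, n ≤ p + q → f (x ^ p * y ^ q) ∈ monomialFiltration K x y n') :
    monomialFiltration K x y n ≤ (monomialFiltration K x y n').comap f :=
  span_le.mpr fun _ ⟨p, q, h, hr⟩ => hr ▸ hf p q h

lemma fst_pow_mul_mem {v : R} {n : ℕ} (hv : v ∈ monomialFiltration K x y n) (k : ℕ) :
    x ^ k * v ∈ monomialFiltration K x y (k + n) :=
  le_comap (f := LinearMap.mulLeft K (x ^ k)) (fun p q h => by
    rw [LinearMap.mulLeft_apply, ← mul_assoc, ← pow_add]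
    exact pow_mul_pow_mem (by omega)) hv

lemma mul_snd_pow_mem {v : R} {n : ℕ} (hv : v ∈ monomialFiltration K x y n) (l : ℕ) :
    v * y ^ l ∈ monomialFiltration K x y (n + l) :=
  le_comap (f := LinearMap.mulRight K (y ^ l)) (fun p q h => by
    rw [LinearMap.mulRight_apply, mul_assoc, ← pow_add]
    exact pow_mul_pow_mem (by omega)) hv

lemma eq_bot {n₁ n₂ : ℕ} (hx : x ^ (n₁ + 1) = 0) (hy : y ^ (n₂ + 1) = 0) :
    monomialFiltration K x y (n₁ + n₂ + 1) = ⊥ := by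
  refine eq_bot_iff.mpr (span_le.mpr ?_)
  rintro _ ⟨p, q, h, rfl⟩
  rw [SetLike.mem_coe, mem_bot]
  rcases le_or_gt (n₁ + 1) p with hp | hp
  · rw [← Nat.sub_add_cancel hp, pow_add, hx, mul_zero, zero_mul]
  · rw [← Nat.sub_add_cancel (show n₂ + 1 ≤ q by omega), pow_add, hy, mul_zero, mul_zero]

section Commutation

variable {m : ℕ} (hm : 2 ≤ m) (hyx : y * x = x * y + (1 + x) * (1 + y) * y ^ m)
include hm hyx

lemma snd_pow_mul_fst_mem (q : ℕ) : y ^ q * x ∈ monomialFiltration K x y (q + 1) := by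
  induction q with
  | zero => simpa using fst_mem
  | succ q ih =>
    have hq : y ^ q + y ^ q * x ∈ monomialFiltration K x y q :=
      add_mem (by simpa using pow_mul_pow_mem (K := K) (x := x) (p := 0) (q := q) le_rfl)
        (antitone q.le_succ ih)
    have hq' : (y ^ q + y ^ q * x) * (1 + y) ∈ monomialFiltration K x y q := by
      rw [mul_add, mul_one]
      exact add_mem hq (antitone q.le_succ (by simpa using mul_snd_pow_mem hq 1))
    have expand :
        y ^ (q + 1) * x = y ^ q * x * y + (y ^ q + y ^ q * x) * (1 + y) * y ^ m := by
      rw [pow_succ, mul_assoc, hyx]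
      noncomm_ring
    rw [expand]
    exact add_mem (by simpa using mul_snd_pow_mem ih 1)
      (antitone (by omega) (mul_snd_pow_mem hq' m))

lemma mul_fst_mem {v : R} {n : ℕ} (hv : v ∈ monomialFiltration K x y n) :
    v * x ∈ monomialFiltration K x y (n + 1) :=
  le_comap (f := LinearMap.mulRight K x) (fun p q h => by
    rw [LinearMap.mulRight_apply, mul_assoc]
    exact antitone (by omega) (fst_pow_mul_mem (snd_pow_mul_fst_mem hm hyx q) p)) hv

lemma mul_fst_pow_mem {v : R} {n : ℕ} (hv : v ∈ monomialFiltration K x y n) (k : ℕ) :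
    v * x ^ k ∈ monomialFiltration K x y (n + k) := by
  induction k with
  | zero => simpa using hv
  | succ k ih =>
    rw [pow_succ, ← mul_assoc, ← add_assoc]
    exact mul_fst_mem hm hyx ih

lemma mul_mem {v w : R} {n n' : ℕ} (hv : v ∈ monomialFiltration K x y n)
    (hw : w ∈ monomialFiltration K x y n') : v * w ∈ monomialFiltration K x y (n + n') :=
  le_comap (f := LinearMap.mulLeft K v) (fun p q h => by
    rw [LinearMap.mulLeft_apply, ← mul_assoc]
    exact antitone (by omega) (mul_snd_pow_mem (mul_fst_pow_mem hm hyx hv p) q)) hw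

lemma ideal_pow_succ_subset {I : Ideal R} (hI : (I : Set R) ⊆ monomialFiltration K x y 1)
    (n : ℕ) :
    ((I ^ (n + 1) : Ideal R) : Set R) ⊆ monomialFiltration K x y (n + 1) := by
  induction n with
  | zero => rwa [zero_add, Submodule.pow_one]
  | succ n ih =>
    intro z hz
    rw [SetLike.mem_coe, Submodule.pow_succ] at hz
    exact Submodule.mul_induction_on hz (fun v hv w hw => mul_mem hm hyx (ih hv) (hI hw))
      fun _ _ => add_mem

end Commutation

end monomialFiltration

end MonomialFiltration

section CharTwo

open Finset

variable {R : Type*} [Ring R]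

lemma sub_one_pow_char_pow (p : ℕ) [Fact p.Prime] [CharP R p] (A : R) (k : ℕ) :
    (A - 1) ^ p ^ k = A ^ p ^ k - 1 := by
  rw [sub_pow_char_pow_of_commute p k (Commute.one_right A), one_pow]

variable [CharP R 2]

lemma sub_one_pow_two_pow_sub_one (A : R) (k : ℕ) :
    (A - 1) ^ (2 ^ k - 1) = ∑ i ∈ range (2 ^ k), A ^ i := by
  induction k with
  | zero => simp
  | succ k ih =>
    have h2k : 2 ^ (k + 1) = 2 ^ k + 2 ^ k := by rw [pow_succ, mul_two]
    have := Nat.one_le_two_pow (n := k)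
    rw [show 2 ^ (k + 1) - 1 = 2 ^ k + (2 ^ k - 1) by omega, pow_add, sub_one_pow_char_pow,
      ih, h2k, sum_range_add, sub_mul, one_mul, mul_sum, CharTwo.sub_eq_add, add_comm]
    simp_rw [← pow_add]

lemma sub_one_mul_sub_one_of_mul_eq_mul_pow {A B : R} {e : ℕ}
    (h : A * B = B * A ^ (1 + 2 ^ e)) :
    (A - 1) * (B - 1) = (B - 1) * (A - 1) + B * A * (A - 1) ^ 2 ^ e := by
  have h' : B * (A * A ^ 2 ^ e) = A * B := by rw [← pow_succ', add_comm, h]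
  have hcomm : B * A * (A ^ 2 ^ e - 1) = A * B - B * A := by
    rw [mul_sub, mul_one, mul_assoc, h']
  rw [sub_one_pow_char_pow, hcomm]
  noncomm_ring

end CharTwo

lemma pow_mul_pow_eq_one_iff_of_disjoint {G : Type*} [Group G] {a b : G}
    (hab : Disjoint (Subgroup.zpowers b) (Subgroup.zpowers a)) {i j : ℕ} (hj : j < orderOf b)
    (hi : i < orderOf a) : b ^ j * a ^ i = 1 ↔ j = 0 ∧ i = 0 := by
  refine ⟨fun h => ?_, by rintro ⟨rfl, rfl⟩; simp⟩
  obtain ⟨hbj, hai⟩ := Subgroup.disjoint_iff_mul_eq_one.mp hab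
    (Subgroup.npow_mem_zpowers b j) (Subgroup.npow_mem_zpowers a i) h
  exact ⟨by_contra fun h0 => pow_ne_one_of_lt_orderOf h0 hj hbj,
    by_contra fun h0 => pow_ne_one_of_lt_orderOf h0 hi hai⟩

namespace MonoidAlgebra

open Finset

section Monoid

variable (K G : Type*) [CommRing K] [Monoid G]

noncomputable def augmentation : MonoidAlgebra K G →ₐ[K] K := lift K K G 1

noncomputable def augmentationIdeal : Ideal (MonoidAlgebra K G) :=
  RingHom.ker (augmentation K G)

variable {K G}

lemma of_sub_one_mem_augmentationIdeal (g : G) : of K G g - 1 ∈ augmentationIdeal K G := by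
  simp [augmentationIdeal, augmentation]

lemma augmentationIdeal_subset {M : Submodule K (MonoidAlgebra K G)}
    (hM : ∀ g, of K G g - 1 ∈ M) : (augmentationIdeal K G : Set (MonoidAlgebra K G)) ⊆ M := by
  have key : ∀ z, z - algebraMap K _ (augmentation K G z) ∈ M := by
    intro z
    induction z using MonoidAlgebra.induction_linear with
    | zero => simp
    | add z w hz hw =>
      rw [map_add, map_add, add_sub_add_comm]
      exact add_mem hz hw
    | single g r =>
      have : single g r - algebraMap K _ r = r • (of K G g - 1) := by
        rw [smul_sub, of_apply, smul_single, smul_eq_mul, mul_one, Algebra.algebraMap_eq_smul_one]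
      rw [show augmentation K G (single g r) = r by simp [augmentation], this]
      exact M.smul_mem r (hM g)
  intro z hz
  simpa [(RingHom.mem_ker).mp hz] using key z

end Monoid

lemma augmentationIdeal_isMaximal {K G : Type*} [Field K] [Monoid G] :
    (augmentationIdeal K G).IsMaximal :=
  RingHom.ker_isMaximal_of_surjective _ fun c => ⟨algebraMap K _ c, AlgHom.commutes _ c⟩

section Group

variable {K G : Type*} [CommRing K] [Group G]

lemma of_sub_one_mem_of_mem_closure {M : Submodule K (MonoidAlgebra K G)}
    (hM : ∀ u ∈ M, ∀ v ∈ M, u * v ∈ M) {S : Set G}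
    (hS : ∀ s ∈ S, IsOfFinOrder s ∧ of K G s - 1 ∈ M) {g : G} (hg : g ∈ Subgroup.closure S) :
    of K G g - 1 ∈ M := by
  rw [← Subgroup.mem_toSubmonoid,
    Subgroup.closure_toSubmonoid_of_isOfFinOrder fun s hs => (hS s hs).1] at hg
  induction hg using Submonoid.closure_induction with
  | mem s hs => exact (hS s hs).2
  | one => rw [map_one, sub_self]; exact zero_mem M
  | mul g h _ _ hg hh =>
    have expand : of K G (g * h) - 1 =
        (of K G g - 1) * (of K G h - 1) + (of K G g - 1) + (of K G h - 1) := by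
      rw [map_mul]; noncomm_ring
    rw [expand]
    exact add_mem (add_mem (hM _ hg _ hh) hg) hh

lemma sum_pow_mul_sum_pow_ne_zero [Nontrivial K] {a b : G}
    (hab : Disjoint (Subgroup.zpowers b) (Subgroup.zpowers a)) (ha : 0 < orderOf a)
    (hb : 0 < orderOf b) :
    (∑ j ∈ range (orderOf b), of K G (b ^ j)) * ∑ i ∈ range (orderOf a), of K G (a ^ i) ≠ 0 := by
  classical
  intro h
  rw [sum_mul_sum] at h
  simp_rw [← map_mul] at h
  -- only `j = i = 0` contributes to the coefficient of `1`
  have hcoeff := congrArg (fun f => f.coeff 1) h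
  simp only [coeff_sum, of_apply, coeff_single, Finsupp.finsetSum_apply,
    Finsupp.single_apply] at hcoeff
  rw [sum_congr rfl fun j hj => sum_congr rfl fun i hi => if_congr
    (pow_mul_pow_eq_one_iff_of_disjoint hab (mem_range.mp hj) (mem_range.mp hi)) rfl rfl] at hcoeff
  simp [ite_and, ha, hb] at hcoeff

end Group

end MonoidAlgebra

lemma Ideal.pow_mul_pow_mem_pow {R : Type*} [Semiring R] {I : Ideal R} {x y : R} (hx : x ∈ I)
    (hy : y ∈ I) (p q : ℕ) : x ^ p * y ^ q ∈ I ^ (p + q) := by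
  induction q with
  | zero => simpa using Ideal.pow_mem_pow hx p
  | succ q ih =>
    rw [← add_assoc, Submodule.pow_succ, pow_succ, ← mul_assoc]
    exact Submodule.mul_mem_mul ih hy

lemma Ideal.jacobson_bot_eq_of_isMaximal {R : Type*} [Ring R] {I : Ideal R} (hI : I.IsMaximal)
    (hnil : ∀ x ∈ I, IsNilpotent x) : jacobson ⊥ = I := by
  refine le_antisymm (sInf_le ⟨bot_le, hI⟩) fun x hx => mem_jacobson_iff.mpr fun y => ?_
  obtain ⟨u, hu⟩ := (hnil _ (I.mul_mem_left y hx)).isUnit_one_add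
  refine ⟨↑u⁻¹, ?_⟩
  rw [Submodule.mem_bot, mul_assoc, ← mul_add_one, add_comm, ← hu, Units.inv_mul, sub_self]

namespace MonoidAlgebra

section MetacyclicTwoGroup

variable {K G : Type*} [CommRing K] [Group G] [CharP (MonoidAlgebra K G) 2] {a b : G} {α β : ℕ}
  (hoa : orderOf a = 2 ^ α) (hob : orderOf b = 2 ^ β)
include hoa hob

theorem augmentationIdeal_pow_eq_bot (hgen : Subgroup.closure {a, b} = ⊤) {e : ℕ} (he : e ≠ 0)
    (hab : a * b = b * a ^ (1 + 2 ^ e)) :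
    augmentationIdeal K G ^ (2 ^ β - 1 + (2 ^ α - 1) + 1) = ⊥ := by
  set x := of K G b - 1
  set y := of K G a - 1
  have hm : 2 ≤ 2 ^ e := Nat.le_self_pow he 2
  have hyx : y * x = x * y + (1 + x) * (1 + y) * y ^ 2 ^ e := by
    simpa [x, y] using sub_one_mul_sub_one_of_mul_eq_mul_pow
      (by rw [← map_pow, ← map_mul, ← map_mul, hab] : of K G a * of K G b = _)
  have hgens : ∀ s ∈ ({a, b} : Set G),
      IsOfFinOrder s ∧ of K G s - 1 ∈ monomialFiltration K x y 1 := by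
    simp only [Set.mem_insert_iff, Set.mem_singleton_iff, forall_eq_or_imp, forall_eq]
    exact ⟨⟨orderOf_pos_iff.mp (hoa ▸ Nat.two_pow_pos α), monomialFiltration.snd_mem⟩,
      ⟨orderOf_pos_iff.mp (hob ▸ Nat.two_pow_pos β), monomialFiltration.fst_mem⟩⟩
  have hIF : (augmentationIdeal K G : Set (MonoidAlgebra K G)) ⊆ monomialFiltration K x y 1 :=
    augmentationIdeal_subset fun g => of_sub_one_mem_of_mem_closure
      (fun u hu v hv => monomialFiltration.antitone (by omega)
        (monomialFiltration.mul_mem hm hyx hu hv)) hgens (hgen ▸ Subgroup.mem_top g)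
  have hx0 : x ^ (2 ^ β - 1 + 1) = 0 := by
    rw [Nat.sub_add_cancel Nat.one_le_two_pow, sub_one_pow_char_pow, ← map_pow, ← hob,
      pow_orderOf_eq_one, map_one, sub_self]
  have hy0 : y ^ (2 ^ α - 1 + 1) = 0 := by
    rw [Nat.sub_add_cancel Nat.one_le_two_pow, sub_one_pow_char_pow, ← map_pow, ← hoa,
      pow_orderOf_eq_one, map_one, sub_self]
  refine eq_bot_iff.mpr fun z hz => ?_
  simpa [monomialFiltration.eq_bot hx0 hy0] using
    monomialFiltration.ideal_pow_succ_subset hm hyx hIF _ hz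

theorem augmentationIdeal_pow_ne_bot [Nontrivial K]
    (hint : Disjoint (Subgroup.zpowers b) (Subgroup.zpowers a)) :
    augmentationIdeal K G ^ (2 ^ β - 1 + (2 ^ α - 1)) ≠ ⊥ := by
  intro h
  have hmem := Ideal.pow_mul_pow_mem_pow (of_sub_one_mem_augmentationIdeal (K := K) b)
    (of_sub_one_mem_augmentationIdeal a) (2 ^ β - 1) (2 ^ α - 1)
  rw [h, Submodule.mem_bot, sub_one_pow_two_pow_sub_one, sub_one_pow_two_pow_sub_one, ← hoa,
    ← hob] at hmem
  simp_rw [← map_pow] at hmem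
  exact sum_pow_mul_sum_pow_ne_zero hint (hoa ▸ Nat.two_pow_pos α) (hob ▸ Nat.two_pow_pos β)
    hmem

end MetacyclicTwoGroup

end MonoidAlgebra

lemma loewyLength_eq_of_pow_succ_eq_bot {p : ℕ} {G : Type*} [Group G] {N : ℕ}
    (hN : (Ideal.jacobson (⊥ : Ideal (MonoidAlgebra (ZMod p) G))) ^ (N + 1) = ⊥)
    (hN' : (Ideal.jacobson (⊥ : Ideal (MonoidAlgebra (ZMod p) G))) ^ N ≠ ⊥) :
    loewyLength p G = N + 1 := by
  refine le_antisymm (Nat.sInf_le ⟨N.succ_pos, hN⟩)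
    (le_csInf ⟨N + 1, N.succ_pos, hN⟩ fun n ⟨_, hn⟩ => ?_)
  by_contra! hlt
  exact hN' (eq_bot_iff.mpr ((Ideal.pow_le_pow_right (by omega : n ≤ N)).trans_eq hn))

open MonoidAlgebra in
theorem loewyLength_G2_general (α β γ : ℕ) (h1 : 2 * γ ≤ α) (h3 : 1 ≤ γ)
    (G : Type*) [Group G] (a b : G)
    (hgen : Subgroup.closure {a, b} = ⊤)
    (hoa : orderOf a = 2 ^ α) (hob : orderOf b = 2 ^ β)
    (hconj : b⁻¹ * a * b = a ^ (1 + 2 ^ (α - γ)))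
    (hint : Subgroup.zpowers a ⊓ Subgroup.zpowers b = ⊥) :
    loewyLength 2 G = 2 ^ α + 2 ^ β - 1 := by
  have : CharP (MonoidAlgebra (ZMod 2) G) 2 := charP_of_injective_algebraMap' (ZMod 2) 2
  have hab : a * b = b * a ^ (1 + 2 ^ (α - γ)) := by rw [← hconj]; group
  have hnil :=
    augmentationIdeal_pow_eq_bot (K := ZMod 2) hoa hob hgen (by omega : α - γ ≠ 0) hab
  have hJ : Ideal.jacobson ⊥ = augmentationIdeal (ZMod 2) G :=
    Ideal.jacobson_bot_eq_of_isMaximal augmentationIdeal_isMaximal fun z hz =>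
      ⟨_, (Submodule.mem_bot _).mp (hnil ▸ Ideal.pow_mem_pow hz _)⟩
  have := Nat.one_le_two_pow (n := α)
  have := Nat.one_le_two_pow (n := β)
  rw [show 2 ^ α + 2 ^ β - 1 = 2 ^ β - 1 + (2 ^ α - 1) + 1 by omega]
  apply loewyLength_eq_of_pow_succ_eq_bot <;> rw [hJ]
  · exact hnil
  · exact augmentationIdeal_pow_ne_bot hoa hob (disjoint_iff.mpr hint).symm

/-- For the group `G₂ = ⟨a⟩ ⋊ ⟨b⟩` with `o(a) = 2^α`, `o(b) = 2^β`,
`b⁻¹ a b = a^(1 + 2^(α−γ))`, where `α ≥ 2γ`, `β ≥ γ ≥ 1` and `α + β > 3`,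
the Loewy length satisfies `L(G) = 2^α + 2^β - 1`. -/
theorem loewyLength_G2 (α β γ : ℕ) (h1 : 2 * γ ≤ α) (h2 : γ ≤ β) (h3 : 1 ≤ γ) (h4 : 3 < α + β)
    (G : Type*) [Group G] [Fintype G] (a b : G)
    (hcard : Fintype.card G = 2 ^ (α + β))
    (hgen : Subgroup.closure {a, b} = ⊤)
    (hoa : orderOf a = 2 ^ α) (hob : orderOf b = 2 ^ β)
    (hconj : b⁻¹ * a * b = a ^ (1 + 2 ^ (α - γ)))
    (hint : Subgroup.zpowers a ⊓ Subgroup.zpowers b = ⊥) :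
    loewyLength 2 G = 2 ^ α + 2 ^ β - 1 :=
  loewyLength_G2_general α β γ h1 h3 G a b hgen hoa hob hconj hint
end

section
/- Let G be a finite 2-group generated by two elements a and b such that the commutator subgroup [G,G] is nontrivial and is contained in the center of G (i.e. [[G,G],G] = 1). Then for every s ≥ 1, the subgroup G^(2^s) generated by the 2^s-th powers of elements of G equals the subgroup generated by {a^(2^s), b^(2^s), [a,b]^(2^(s−1))}, where [a,b] = a⁻¹b⁻¹ab. -/
/-!
When commutators are central, the commutator map is bimultiplicative, so every commutator is a
power of `⁅a, b⁆`, and `(x * y) ^ n = x ^ n * y ^ n * ⁅y, x⁆ ^ (n.choose 2)`. For `n = 2 ^ (s + 1)`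
the correction term is `(⁅y, x⁆ ^ 2 ^ s) ^ (2 ^ (s + 1) - 1)`. This gives one inclusion by
induction over words in `a, b`; for the other, `2 ^ (s + 1) - 1` is odd, hence invertible modulo
the order of any element of a `2`-group, so `⁅a, b⁆ ^ 2 ^ s` is a power of the correction term for
`x = b`, `y = a`.
-/

/-- For a subgroup `H` of `G`, the subgroup `H^n` generated by the `n`-th powers of the
elements of `H`. -/
def powSubgroup {G : Type*} [Group G] (n : ℕ) (H : Subgroup G) : Subgroup G :=
  Subgroup.closure ((fun x => x ^ n) '' (H : Set G))

open Subgroup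
open scoped commutatorElement

section

variable {G : Type*} [Group G]

theorem commute_commutatorElement (h : commutator G ≤ center G) (x y z : G) :
    Commute ⁅x, y⁆ z :=
  (mem_center_iff.mp (h (commutator_mem_commutator (mem_top x) (mem_top y))) z).symm

theorem commutatorElement_mul_left_of_le_center (h : commutator G ≤ center G) (x y z : G) :
    ⁅x * y, z⁆ = ⁅x, z⁆ * ⁅y, z⁆ := by
  rw [commutatorElement_mul_left_eq_conj_mul, ← (commute_commutatorElement h y z x).eq,
    mul_inv_cancel_right, (commute_commutatorElement h y z _).eq]

theorem commutatorElement_mul_right_of_le_center (h : commutator G ≤ center G) (x y z : G) :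
    ⁅x, y * z⁆ = ⁅x, y⁆ * ⁅x, z⁆ := by
  rw [commutatorElement_mul_right_eq_mul_conj, mul_assoc ⁅x, y⁆,
    ← (commute_commutatorElement h x z y).eq, ← mul_assoc, mul_inv_cancel_right]

theorem commutatorElement_inv_left_of_le_center (h : commutator G ≤ center G) (x y : G) :
    ⁅x⁻¹, y⁆ = ⁅x, y⁆⁻¹ := by
  rw [commutatorElement_inv_left, ← (commute_commutatorElement h y x x⁻¹).eq,
    inv_mul_cancel_right, commutatorElement_inv]

theorem commutatorElement_inv_right_of_le_center (h : commutator G ≤ center G) (x y : G) :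
    ⁅x, y⁻¹⁆ = ⁅x, y⁆⁻¹ := by
  rw [commutatorElement_inv_right, ← (commute_commutatorElement h y x y⁻¹).eq,
    inv_mul_cancel_right, commutatorElement_inv]

theorem commutatorElement_pow_left_of_le_center (h : commutator G ≤ center G) (x y : G)
    (n : ℕ) :
    ⁅x ^ n, y⁆ = ⁅x, y⁆ ^ n := by
  induction n with
  | zero => simp
  | succ n ih => rw [pow_succ, commutatorElement_mul_left_of_le_center h, ih, pow_succ]

theorem mul_pow_of_le_center (h : commutator G ≤ center G) (x y : G) (n : ℕ) :
    (x * y) ^ n = x ^ n * y ^ n * ⁅y, x⁆ ^ n.choose 2 := by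
  induction n with
  | zero => simp
  | succ n ih =>
    have hz : ∀ k : ℕ, ∀ g : G, Commute (⁅y, x⁆ ^ k) g :=
      fun k g => (commute_commutatorElement h y x g).pow_left k
    have hyx : y ^ n * x = ⁅y, x⁆ ^ n * x * y ^ n := by
      rw [← commutatorElement_pow_left_of_le_center h, commutatorElement_def]; group
    calc (x * y) ^ (n + 1) = x ^ n * (y ^ n * x) * y * ⁅y, x⁆ ^ n.choose 2 := by
          rw [pow_succ, ih, mul_assoc _ _ (x * y), (hz _ _).eq]
          simp only [mul_assoc]
      _ = x ^ (n + 1) * y ^ (n + 1) * ⁅y, x⁆ ^ (n + 1).choose 2 := by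
          rw [hyx, Nat.choose_succ_succ', Nat.choose_one_right, pow_add ⁅y, x⁆, pow_succ x,
            pow_succ y]
          simp only [← mul_assoc]
          rw [← (hz n (x ^ n)).eq, ← (hz n (x ^ n * x * y ^ n * y)).eq]
          simp only [mul_assoc]

theorem mul_pow_two_pow_succ_of_le_center (h : commutator G ≤ center G) (x y : G) (s : ℕ) :
    (x * y) ^ 2 ^ (s + 1) =
      x ^ 2 ^ (s + 1) * y ^ 2 ^ (s + 1) * (⁅y, x⁆ ^ 2 ^ s) ^ (2 ^ (s + 1) - 1) := by
  rw [mul_pow_of_le_center h, Nat.choose_two_right, ← pow_mul, pow_succ, mul_right_comm,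
    Nat.mul_div_cancel _ two_pos]

theorem commutatorElement_mem_zpowers_of_closure_eq_top (h : commutator G ≤ center G) {a b : G}
    (hgen : closure {a, b} = ⊤) (x y : G) : ⁅x, y⁆ ∈ zpowers ⁅a, b⁆ := by
  have hx : x ∈ closure {a, b} := hgen ▸ mem_top x
  have hy : y ∈ closure {a, b} := hgen ▸ mem_top y
  induction hx, hy using closure_induction₂ with
  | mem x y hx hy =>
    rcases hx with rfl | rfl <;> rcases hy with rfl | rfl
    · simp
    · exact mem_zpowers _
    · rw [← inv_mem_iff, commutatorElement_inv]; exact mem_zpowers _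
    · simp
  | one_left => simp
  | one_right => simp
  | mul_left x y z _ _ _ hx hy =>
    rw [commutatorElement_mul_left_of_le_center h]; exact mul_mem hx hy
  | mul_right y z x _ _ _ hy hz =>
    rw [commutatorElement_mul_right_of_le_center h]; exact mul_mem hy hz
  | inv_left x y _ _ hxy => rw [commutatorElement_inv_left_of_le_center h]; exact inv_mem hxy
  | inv_right x y _ _ hxy => rw [commutatorElement_inv_right_of_le_center h]; exact inv_mem hxy

theorem pow_mem_powSubgroup (n : ℕ) (x : G) : x ^ n ∈ powSubgroup n ⊤ :=
  subset_closure ⟨x, mem_top x, rfl⟩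

theorem Subgroup.mem_of_pow_mem_of_coprime {H : Subgroup G} {g : G} {n : ℕ}
    (hn : n.Coprime (orderOf g)) (hg : g ^ n ∈ H) : g ∈ H := by
  obtain ⟨m, hm⟩ := exists_pow_eq_self_of_coprime hn
  exact hm ▸ pow_mem hg m

theorem powSubgroup_two_pow_succ_le (h : commutator G ≤ center G) {a b : G}
    (hgen : closure {a, b} = ⊤) {s : ℕ} {K : Subgroup G} (ha : a ^ 2 ^ (s + 1) ∈ K)
    (hb : b ^ 2 ^ (s + 1) ∈ K) (hab : ⁅a, b⁆ ^ 2 ^ s ∈ K) :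
    powSubgroup (2 ^ (s + 1)) ⊤ ≤ K := by
  refine (closure_le _).mpr ?_
  rintro _ ⟨x, -, rfl⟩
  change x ^ 2 ^ (s + 1) ∈ K
  have hx : x ∈ closure {a, b} := hgen ▸ mem_top x
  induction hx using closure_induction with
  | mem x hx => rcases hx with rfl | rfl <;> assumption
  | one => simp
  | mul x y _ _ hx hy =>
    obtain ⟨k, hk⟩ :=
      mem_zpowers_iff.mp (commutatorElement_mem_zpowers_of_closure_eq_top h hgen y x)
    have hyx : ⁅y, x⁆ ^ 2 ^ s ∈ K := by
      rw [← hk, ← zpow_natCast, ← zpow_mul, mul_comm, zpow_mul, zpow_natCast]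
      exact zpow_mem hab k
    rw [mul_pow_two_pow_succ_of_le_center h]
    exact mul_mem (mul_mem hx hy) (pow_mem hyx _)
  | inv x _ hx => rw [inv_pow]; exact inv_mem hx

theorem commutatorElement_pow_mem_powSubgroup (hG : IsPGroup 2 G) (h : commutator G ≤ center G)
    (x y : G) (s : ℕ) : ⁅x, y⁆ ^ 2 ^ s ∈ powSubgroup (2 ^ (s + 1)) ⊤ := by
  have hodd : Odd (2 ^ (s + 1) - 1) :=
    Nat.Even.sub_odd Nat.one_le_two_pow ((Nat.even_pow' (by omega)).mpr even_two) odd_one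
  refine mem_of_pow_mem_of_coprime (hG.orderOf_coprime (Nat.coprime_two_left.mpr hodd) _).symm ?_
  rw [← mul_mem_cancel_left (mul_mem (pow_mem_powSubgroup _ y) (pow_mem_powSubgroup _ x)),
    ← mul_pow_two_pow_succ_of_le_center h]
  exact pow_mem_powSubgroup _ _

end

theorem powSubgroup_eq_closure_general (G : Type*) [Group G] (hG : IsPGroup 2 G)
    (a b : G) (hgen : Subgroup.closure {a, b} = ⊤)
    (h2 : ⁅⁅(⊤ : Subgroup G), (⊤ : Subgroup G)⁆, (⊤ : Subgroup G)⁆ = ⊥) :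
    ∀ s : ℕ, 1 ≤ s →
      powSubgroup (2 ^ s) (⊤ : Subgroup G) =
        Subgroup.closure {a ^ 2 ^ s, b ^ 2 ^ s, (a⁻¹ * b⁻¹ * a * b) ^ 2 ^ (s - 1)} := by
  have h : commutator G ≤ center G := commutator_top_right_eq_bot_iff_le_center.mp h2
  have hab : a⁻¹ * b⁻¹ * a * b = ⁅a, b⁆ := calc
    a⁻¹ * b⁻¹ * a * b = ⁅a⁻¹, b⁻¹⁆ := by rw [commutatorElement_def, inv_inv, inv_inv]
    _ = ⁅a, b⁆ := by
      rw [commutatorElement_inv_left_of_le_center h, commutatorElement_inv_right_of_le_center h,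
        inv_inv]
  intro s hs
  obtain ⟨s, rfl⟩ := Nat.exists_eq_add_of_le' hs
  rw [Nat.add_sub_cancel, hab]
  refine le_antisymm (powSubgroup_two_pow_succ_le h hgen ?_ ?_ ?_) ((closure_le _).mpr ?_)
  · exact subset_closure (by simp)
  · exact subset_closure (by simp)
  · exact subset_closure (by simp)
  · rintro _ (rfl | rfl | rfl)
    · exact pow_mem_powSubgroup _ a
    · exact pow_mem_powSubgroup _ b
    · exact commutatorElement_pow_mem_powSubgroup hG h a b s

/-- Let `G = ⟨a, b⟩` be a finite 2-group with `[G,G] ≠ 1` and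
`[[G,G],G] = 1`. Then for every `s ≥ 1`,
`G^(2^s) = ⟨a^(2^s), b^(2^s), [a,b]^(2^(s-1))⟩`. -/
theorem powSubgroup_eq_closure (G : Type*) [Group G] [Finite G] (hG : IsPGroup 2 G)
    (a b : G) (hgen : Subgroup.closure {a, b} = ⊤)
    (h1 : ⁅(⊤ : Subgroup G), (⊤ : Subgroup G)⁆ ≠ ⊥)
    (h2 : ⁅⁅(⊤ : Subgroup G), (⊤ : Subgroup G)⁆, (⊤ : Subgroup G)⁆ = ⊥) :
    ∀ s : ℕ, 1 ≤ s →
      powSubgroup (2 ^ s) (⊤ : Subgroup G) =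
        Subgroup.closure {a ^ 2 ^ s, b ^ 2 ^ s, (a⁻¹ * b⁻¹ * a * b) ^ 2 ^ (s - 1)} :=
  powSubgroup_eq_closure_general G hG a b hgen h2
end
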